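/- arXiv:1307.4741 — 2 statements merged into one kernel-verified Lean document; each statement's English description precedes it below -/
import Mathlib

section
/- Let r, v ∈ ℝ³ with v ≠ 0, ‖r‖ ≥ a > 0, ⟨v, r⟩ ≥ 0, a² - ‖r‖² + ⟨v, r⟩²/‖v‖² ≥ 0, and let t* = (1/‖v‖)(⟨v, r⟩/‖v‖ - √(a² - ‖r‖² + ⟨v, r⟩²/‖v‖²)). Then t* is the minimal nonnegative solution of ‖r - v t‖ = a: for every t ∈ [0, t*), ‖r - v t‖ > a. -/
open scoped RealInnerProductSpace

abbrev V3 : Type := EuclideanSpace ℝ (Fin 3)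

/-!
Completing the square in `t`,
`‖r - t v‖² - a² = (⟪v, r⟫/‖v‖ - ‖v‖ t)² - D` with `D = a² - ‖r‖² + ⟪v, r⟫²/‖v‖²`.
For `t < t*` the base `⟪v, r⟫/‖v‖ - ‖v‖ t` exceeds `√D ≥ 0`, so its square exceeds `D`.
-/

section CollisionTime

variable {E : Type*} [NormedAddCommGroup E] [InnerProductSpace ℝ E]

/-- The smaller root of `‖r - t v‖ = a`. -/
noncomputable def collisionTime (a : ℝ) (r v : E) : ℝ :=
  (1 / ‖v‖) * (⟪v, r⟫ / ‖v‖ - Real.sqrt (a ^ 2 - ‖r‖ ^ 2 + ⟪v, r⟫ ^ 2 / ‖v‖ ^ 2))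

theorem norm_sub_smul_sq_eq_sq_add {v : E} (hv : v ≠ 0) (r : E) (t : ℝ) :
    ‖r - t • v‖ ^ 2 = (⟪v, r⟫ / ‖v‖ - ‖v‖ * t) ^ 2 + (‖r‖ ^ 2 - ⟪v, r⟫ ^ 2 / ‖v‖ ^ 2) := by
  have hn : ‖v‖ ≠ 0 := norm_ne_zero_iff.mpr hv
  rw [norm_sub_sq_real, real_inner_smul_right, real_inner_comm, norm_smul, Real.norm_eq_abs,
    mul_pow, sq_abs]
  field_simp
  ring

theorem lt_norm_sub_smul_of_lt_collisionTime {a : ℝ} {r v : E} (hv : v ≠ 0) {t : ℝ}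
    (ht : t < collisionTime a r v) : a < ‖r - t • v‖ := by
  have hn : 0 < ‖v‖ := norm_pos_iff.mpr hv
  have hbase : Real.sqrt (a ^ 2 - ‖r‖ ^ 2 + ⟪v, r⟫ ^ 2 / ‖v‖ ^ 2) < ⟪v, r⟫ / ‖v‖ - ‖v‖ * t := by
    rw [collisionTime, one_div_mul_eq_div, lt_div_iff₀ hn] at ht
    linarith
  refine lt_of_pow_lt_pow_left₀ 2 (norm_nonneg _) ?_
  rw [norm_sub_smul_sq_eq_sq_add hv]
  linarith [Real.lt_sq_of_sqrt_lt hbase]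

end CollisionTime

theorem collision_time_minimal_general (a : ℝ) (r v : V3) (hv : v ≠ 0) :
    ∀ t : ℝ, 0 ≤ t →
      t < (1 / ‖v‖) * (⟪v, r⟫ / ‖v‖ -
        Real.sqrt (a ^ 2 - ‖r‖ ^ 2 + ⟪v, r⟫ ^ 2 / ‖v‖ ^ 2)) →
      ‖r - t • v‖ > a :=
  fun _ _ ht => lt_norm_sub_smul_of_lt_collisionTime hv ht

/-- The explicit collision time is the minimal nonnegative solution of the
contact equation `‖r - v t‖ = a`. -/
theorem collision_time_minimal (a : ℝ) (ha : 0 < a) (r v : V3) (hv : v ≠ 0)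
    (hr : ‖r‖ ≥ a) (hvr : ⟪v, r⟫ ≥ 0)
    (hdisc : a ^ 2 - ‖r‖ ^ 2 + ⟪v, r⟫ ^ 2 / ‖v‖ ^ 2 ≥ 0) :
    ∀ t : ℝ, 0 ≤ t →
      t < (1 / ‖v‖) * (⟪v, r⟫ / ‖v‖ -
        Real.sqrt (a ^ 2 - ‖r‖ ^ 2 + ⟪v, r⟫ ^ 2 / ‖v‖ ^ 2)) →
      ‖r - t • v‖ > a :=
  collision_time_minimal_general a r v hv
end

section
/- Let t* > 0 and suppose ‖r - v t*‖ = a with ‖r‖ > a. Define σ = (r - v t*)/a. Then ‖σ‖ = 1 and ⟨v, σ⟩ ≥ 0, i.e., the contact configuration is pre-collisional. -/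
/-! At first contact the distance `‖r - t v‖` has just decreased to `a`, so moving back in time
(`t = t* - ε`) cannot shorten `w = r - t* v`. Expanding `‖w + ε v‖² = ‖w‖² + 2ε⟪w, v⟫ + ε²‖v‖²`
and letting `ε → 0⁺` gives `⟪w, v⟫ ≥ 0`; dividing `w` by `‖w‖ = a` gives the unit vector `σ`. -/

open scoped RealInnerProductSpace

open Filter Topology

theorem real_inner_nonneg_of_norm_le_norm_add_smul {E : Type*} [NormedAddCommGroup E]
    [InnerProductSpace ℝ E] {w v : E} (h : ∀ᶠ ε in 𝓝[>] (0 : ℝ), ‖w‖ ≤ ‖w + ε • v‖) :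
    0 ≤ ⟪w, v⟫ := by
  have hslope : ∀ᶠ ε in 𝓝[>] (0 : ℝ), 0 ≤ 2 * ⟪w, v⟫ + ε * ‖v‖ ^ 2 := by
    filter_upwards [h, self_mem_nhdsWithin] with ε hε hpos
    have hsq : ‖w‖ ^ 2 ≤ ‖w + ε • v‖ ^ 2 := pow_le_pow_left₀ (norm_nonneg w) hε 2
    rw [norm_add_sq_real, real_inner_smul_right, norm_smul, Real.norm_eq_abs,
      abs_of_pos hpos] at hsq
    nlinarith [hpos.out]
  have hlim : Tendsto (fun ε : ℝ => 2 * ⟪w, v⟫ + ε * ‖v‖ ^ 2) (𝓝[>] 0) (𝓝 (2 * ⟪w, v⟫)) := by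
    have hε : Tendsto (fun ε : ℝ => ε) (𝓝[>] 0) (𝓝 0) := nhdsWithin_le_nhds
    simpa using (hε.mul_const (‖v‖ ^ 2)).const_add (2 * ⟪w, v⟫)
  linarith [ge_of_tendsto hlim hslope]

theorem contact_is_precollisional_general (a : ℝ) (ha : 0 < a) (r v : V3)
    (tstar : ℝ) (htpos : 0 < tstar)
    (hcontact : ‖r - tstar • v‖ = a)
    (hmin : ∀ t : ℝ, 0 ≤ t → t < tstar → ‖r - t • v‖ > a) :
    ‖(a⁻¹ : ℝ) • (r - tstar • v)‖ = 1 ∧ ⟪v, (a⁻¹ : ℝ) • (r - tstar • v)⟫ ≥ 0 := by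
  have hbackward : ∀ᶠ ε in 𝓝[>] (0 : ℝ), ‖r - tstar • v‖ ≤ ‖r - tstar • v + ε • v‖ := by
    filter_upwards [Ioo_mem_nhdsGT htpos] with ε ⟨hε, hεt⟩
    have hshift : r - tstar • v + ε • v = r - (tstar - ε) • v := by
      rw [sub_smul]; abel
    rw [hshift, hcontact]
    exact (hmin _ (by linarith) (by linarith)).le
  constructor
  · rw [norm_smul, hcontact, Real.norm_of_nonneg (inv_nonneg.mpr ha.le), inv_mul_cancel₀ ha.ne']
  · rw [real_inner_smul_right, real_inner_comm]
    exact mul_nonneg (inv_nonneg.mpr ha.le) (real_inner_nonneg_of_norm_le_norm_add_smul hbackward)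

/-- At the moment of first contact, the unit impact vector `σ = (r - v t*)/a`
satisfies `‖σ‖ = 1` and `⟪v, σ⟫ ≥ 0`: the configuration is pre-collisional. -/
theorem contact_is_precollisional (a : ℝ) (ha : 0 < a) (r v : V3) (hv : v ≠ 0)
    (tstar : ℝ) (htpos : 0 < tstar) (hr : ‖r‖ > a)
    (hcontact : ‖r - tstar • v‖ = a)
    (hmin : ∀ t : ℝ, 0 ≤ t → t < tstar → ‖r - t • v‖ > a) :
    ‖(a⁻¹ : ℝ) • (r - tstar • v)‖ = 1 ∧ ⟪v, (a⁻¹ : ℝ) • (r - tstar • v)⟫ ≥ 0 :=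
  contact_is_precollisional_general a ha r v tstar htpos hcontact hmin
end
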